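/- (Theorem 2, abstract form) Let K be a nonempty index set and for each k ∈ K let σ_k ∈ {−1, +1}, λ_k ∈ ℝ, r_k ≥ 0, and set S_SG = ⋂_{k ∈ K} S(Π(σ_k, λ_k, r_k)). Let Z ⊆ ℂ be any set with Z ⊆ S_SG that is symmetric about the real axis, i.e., Z ∩ ℂ₊ = conj(Z ∩ ℂ₋) where ℂ₋ = {z : Im z ≤ 0} (elementwise conjugation). Then h-hull(Z ∩ ℂ₊) ∪ conj(h-hull(Z ∩ ℂ₊)) ⊆ S_SG. -/

import Mathlib

/-- The open upper half-plane ℂ₊ = {z ∈ ℂ : Im z > 0}. -/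
def Cplus : Set ℂ := {z : ℂ | 0 < z.im}

open Classical in
/-- The hyperbolic geodesic arc between z₁ and z₂: if Re z₁ = Re z₂ it is the vertical
segment between them; otherwise it is the arc of the circle centered at
c = (|z₂|² − |z₁|²)/(2·(Re z₂ − Re z₁)) on the real axis through z₁ and z₂. -/
noncomputable def ARC (z₁ z₂ : ℂ) : Set ℂ :=
  if z₁.re = z₂.re then
    {w | ∃ t : ℝ, min z₁.im z₂.im ≤ t ∧ t ≤ max z₁.im z₂.im ∧
      w = (z₁.re : ℂ) + (t : ℂ) * Complex.I}
  else
    let c : ℝ := (‖z₂‖ ^ 2 - ‖z₁‖ ^ 2) / (2 * (z₂.re - z₁.re))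
    let ρ : ℝ := ‖z₁ - (c : ℂ)‖
    let φ₁ : ℝ := Complex.arg (z₁ - (c : ℂ))
    let φ₂ : ℝ := Complex.arg (z₂ - (c : ℂ))
    {w | ∃ φ : ℝ, min φ₁ φ₂ ≤ φ ∧ φ ≤ max φ₁ φ₂ ∧
      w = (c : ℂ) + (ρ : ℂ) * Complex.exp (Complex.I * (φ : ℂ))}

/-- A set C ⊆ ℂ₊ is h-convex if for all z₁, z₂ ∈ C, ARC(z₁, z₂) ⊆ C. -/
def HConvex (C : Set ℂ) : Prop :=
  ∀ z₁ ∈ C, ∀ z₂ ∈ C, ARC z₁ z₂ ⊆ C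

/-- The h-convex hull of C ⊆ ℂ₊: the intersection of all h-convex sets D with
C ⊆ D ⊆ ℂ₊. -/
def hhull (C : Set ℂ) : Set ℂ :=
  ⋂₀ {D : Set ℂ | HConvex D ∧ C ⊆ D ∧ D ⊆ Cplus}

/-- The region S(Pm) = {z ∈ ℂ : π₁₁·|z|² + 2·π₁₂·(Re z) + π₂₂ ≥ 0}. -/
noncomputable def SRegion (Pm : Matrix (Fin 2) (Fin 2) ℝ) : Set ℂ :=
  {z : ℂ | 0 ≤ Pm 0 0 * ‖z‖ ^ 2 + 2 * Pm 0 1 * z.re + Pm 1 1}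

/-- The parameterized matrix Π(σ, λ_c, r) = σ·[[1, −λ_c],[−λ_c, λ_c² − r²]]. -/
def PiMat (σ lc r : ℝ) : Matrix (Fin 2) (Fin 2) ℝ :=
  σ • !![1, -lc; -lc, lc ^ 2 - r ^ 2]


lemma arg_pos_of_im_pos' {z : ℂ} (hz : 0 < z.im) : 0 < z.arg := by
  by_contra h
  push_neg at h
  have h1 : Real.sin z.arg ≤ 0 :=
    Real.sin_nonpos_of_nonpos_of_neg_pi_le h (Complex.neg_pi_lt_arg z).le
  rw [Complex.sin_arg] at h1
  have hz0 : z ≠ 0 := fun h' => by simp [h'] at hz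
  have : 0 < z.im / ‖z‖ := div_pos hz (norm_pos_iff.mpr hz0)
  linarith

lemma arg_lt_pi_of_im_pos' {z : ℂ} (hz : 0 < z.im) : z.arg < Real.pi :=
  Complex.arg_lt_pi_iff.mpr (Or.inr hz.ne')

lemma quad_between' (A B u u₁ u₂ : ℝ) (h1 : min u₁ u₂ ≤ u) (h2 : u ≤ max u₁ u₂) :
    min (A + B*u₁) (A + B*u₂) ≤ A + B*u ∧ A + B*u ≤ max (A + B*u₁) (A + B*u₂) := by
  rcases le_total u₁ u₂ with h | h
  · rw [min_eq_left h] at h1; rw [max_eq_right h] at h2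
    rcases le_total 0 B with hB | hB
    · exact ⟨le_trans (min_le_left _ _) (by nlinarith),
        le_trans (by nlinarith) (le_max_right _ _)⟩
    · exact ⟨le_trans (min_le_right _ _) (by nlinarith),
        le_trans (by nlinarith) (le_max_left _ _)⟩
  · rw [min_eq_right h] at h1; rw [max_eq_left h] at h2
    rcases le_total 0 B with hB | hB
    · exact ⟨le_trans (min_le_right _ _) (by nlinarith),
        le_trans (by nlinarith) (le_max_left _ _)⟩
    · exact ⟨le_trans (min_le_left _ _) (by nlinarith),
        le_trans (by nlinarith) (le_max_right _ _)⟩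

lemma arc_key' (l : ℝ) {z₁ z₂ : ℂ} (h₁ : 0 < z₁.im) (h₂ : 0 < z₂.im) {w : ℂ}
    (hw : w ∈ ARC z₁ z₂) :
    0 < w.im ∧
    min (Complex.normSq (z₁ - l)) (Complex.normSq (z₂ - l)) ≤ Complex.normSq (w - l) ∧
    Complex.normSq (w - l) ≤ max (Complex.normSq (z₁ - l)) (Complex.normSq (z₂ - l)) := by
  have ens : ∀ z : ℂ, Complex.normSq (z - l) = (z.re - l)^2 + z.im^2 := by
    intro z
    simp [Complex.normSq_apply, Complex.sub_re, Complex.sub_im]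
    ring
  unfold ARC at hw
  split_ifs at hw with hre
  · obtain ⟨t, ht1, ht2, rfl⟩ := hw
    have hwim : ((z₁.re:ℂ) + (t:ℂ)*Complex.I).im = t := by simp
    have hwre : ((z₁.re:ℂ) + (t:ℂ)*Complex.I).re = z₁.re := by simp
    have ht0 : 0 < t := lt_of_lt_of_le (lt_min h₁ h₂) ht1
    rw [ens, ens, ens, hwim, hwre, ← hre]
    refine ⟨ht0, ?_⟩
    have hsq : min (z₁.im^2) (z₂.im^2) ≤ t^2 ∧ t^2 ≤ max (z₁.im^2) (z₂.im^2) := by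
      rcases le_total z₁.im z₂.im with h | h
      · rw [min_eq_left h] at ht1; rw [max_eq_right h] at ht2
        constructor
        · exact le_trans (min_le_left _ _) (by nlinarith)
        · exact le_trans (by nlinarith) (le_max_right _ _)
      · rw [min_eq_right h] at ht1; rw [max_eq_left h] at ht2
        constructor
        · exact le_trans (min_le_right _ _) (by nlinarith)
        · exact le_trans (by nlinarith) (le_max_left _ _)
    have := quad_between' ((z₁.re - l)^2) 1 (t^2) (z₁.im^2) (z₂.im^2) hsq.1 hsq.2
    simpa using this
  · obtain ⟨φ, hφ1, hφ2, rfl⟩ := hw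
    set c : ℝ := (‖z₂‖ ^ 2 - ‖z₁‖ ^ 2) / (2 * (z₂.re - z₁.re)) with hc
    set ρ : ℝ := ‖z₁ - (c : ℂ)‖ with hρdef
    set φ₁ : ℝ := Complex.arg (z₁ - (c : ℂ)) with hφ₁def
    set φ₂ : ℝ := Complex.arg (z₂ - (c : ℂ)) with hφ₂def
    have him1 : (z₁ - (c:ℂ)).im = z₁.im := by simp
    have him2 : (z₂ - (c:ℂ)).im = z₂.im := by simp
    have hne1 : z₁ - (c:ℂ) ≠ 0 := by
      intro h; rw [h] at him1; simp at him1; linarith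
    have hρ : 0 < ρ := norm_pos_iff.mpr hne1
    have habs2 : ‖z₂ - (c:ℂ)‖ = ρ := by
      rw [hρdef, Complex.norm_def, Complex.norm_def]
      congr 1
      have hd : z₂.re - z₁.re ≠ 0 := sub_ne_zero.mpr (Ne.symm hre)
      have e1 : ‖z₁‖ ^2 = z₁.re^2 + z₁.im^2 := by
        rw [Complex.sq_norm, Complex.normSq_apply]; ring
      have e2 : ‖z₂‖ ^2 = z₂.re^2 + z₂.im^2 := by
        rw [Complex.sq_norm, Complex.normSq_apply]; ring
      simp only [Complex.normSq_apply, Complex.sub_re, Complex.sub_im,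
        Complex.ofReal_re, Complex.ofReal_im, sub_zero]
      rw [hc, e1, e2]
      field_simp
      ring
    have hz1 : z₁ = (c:ℂ) + (ρ:ℂ) * Complex.exp (Complex.I * (φ₁:ℂ)) := by
      rw [mul_comm Complex.I]
      have := Complex.norm_mul_exp_arg_mul_I (z₁ - (c:ℂ))
      rw [← hρdef, ← hφ₁def] at this
      linear_combination -this
    have hz2 : z₂ = (c:ℂ) + (ρ:ℂ) * Complex.exp (Complex.I * (φ₂:ℂ)) := by
      rw [mul_comm Complex.I]
      have := Complex.norm_mul_exp_arg_mul_I (z₂ - (c:ℂ))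
      rw [habs2, ← hφ₂def] at this
      linear_combination -this
    have hφ₁a : 0 < φ₁ := arg_pos_of_im_pos' (by rw [him1]; exact h₁)
    have hφ₂a : 0 < φ₂ := arg_pos_of_im_pos' (by rw [him2]; exact h₂)
    have hφ₁b : φ₁ < Real.pi := arg_lt_pi_of_im_pos' (by rw [him1]; exact h₁)
    have hφ₂b : φ₂ < Real.pi := arg_lt_pi_of_im_pos' (by rw [him2]; exact h₂)
    have hφa : 0 < φ := lt_of_lt_of_le (lt_min hφ₁a hφ₂a) hφ1
    have hφb : φ < Real.pi := lt_of_le_of_lt hφ2 (max_lt hφ₁b hφ₂b)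
    have hwim : ∀ θ : ℝ, ((c:ℂ) + (ρ:ℂ) * Complex.exp (Complex.I * (θ:ℂ))).im
        = ρ * Real.sin θ := by
      intro θ
      rw [mul_comm Complex.I]
      simp [Complex.add_im, Complex.mul_im, Complex.exp_ofReal_mul_I_im,
        Complex.exp_ofReal_mul_I_re]
    have key : ∀ θ : ℝ, Complex.normSq ((c:ℂ) + (ρ:ℂ) * Complex.exp (Complex.I * (θ:ℂ)) - (l:ℂ))
        = ((c-l)^2 + ρ^2) + (2*ρ*(c-l)) * Real.cos θ := by
      intro θ
      have hs := Real.sin_sq_add_cos_sq θ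
      rw [mul_comm Complex.I]
      simp only [Complex.normSq_apply, Complex.sub_re, Complex.sub_im, Complex.add_re,
        Complex.add_im, Complex.mul_re, Complex.mul_im, Complex.ofReal_re, Complex.ofReal_im,
        Complex.exp_ofReal_mul_I_re, Complex.exp_ofReal_mul_I_im]
      nlinarith [hs]
    refine ⟨?_, ?_⟩
    · rw [hwim]
      exact mul_pos hρ (Real.sin_pos_of_pos_of_lt_pi hφa hφb)
    · have hcosb : min (Real.cos φ₁) (Real.cos φ₂) ≤ Real.cos φ ∧
          Real.cos φ ≤ max (Real.cos φ₁) (Real.cos φ₂) := by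
        rcases le_total φ₁ φ₂ with h | h
        · rw [min_eq_left h] at hφ1; rw [max_eq_right h] at hφ2
          constructor
          · exact le_trans (min_le_right _ _)
              (Real.cos_le_cos_of_nonneg_of_le_pi hφa.le hφ₂b.le hφ2)
          · exact le_trans
              (Real.cos_le_cos_of_nonneg_of_le_pi hφ₁a.le hφb.le hφ1) (le_max_left _ _)
        · rw [min_eq_right h] at hφ1; rw [max_eq_left h] at hφ2
          constructor
          · exact le_trans (min_le_left _ _)
              (Real.cos_le_cos_of_nonneg_of_le_pi hφa.le hφ₁b.le hφ2)
          · exact le_trans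
              (Real.cos_le_cos_of_nonneg_of_le_pi hφ₂a.le hφb.le hφ1) (le_max_right _ _)
      have := quad_between' ((c-l)^2 + ρ^2) (2*ρ*(c-l)) (Real.cos φ) (Real.cos φ₁)
        (Real.cos φ₂) hcosb.1 hcosb.2
      rw [key, hz1, hz2, key, key]
      exact this

lemma mem_SRegion_iff' (s l r : ℝ) (z : ℂ) :
    z ∈ SRegion (PiMat s l r) ↔ 0 ≤ s * (Complex.normSq (z - l) - r^2) := by
  have e : Complex.normSq (z - (l:ℂ)) = z.re^2 - 2*l*z.re + l^2 + z.im^2 := by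
    simp [Complex.normSq_apply, Complex.sub_re, Complex.sub_im]
    ring
  have e2 : ‖z‖ ^2 = z.re^2 + z.im^2 := by
    rw [Complex.sq_norm, Complex.normSq_apply]; ring
  have p00 : (!![(1:ℝ), -l; -l, l^2-r^2]) 0 0 = 1 := rfl
  have p01 : (!![(1:ℝ), -l; -l, l^2-r^2]) 0 1 = -l := rfl
  have p11 : (!![(1:ℝ), -l; -l, l^2-r^2]) 1 1 = l^2 - r^2 := rfl
  simp only [SRegion, PiMat, Set.mem_setOf_eq, Matrix.smul_apply, smul_eq_mul,
    p00, p01, p11]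
  rw [e, e2]
  constructor <;> intro h <;> nlinarith [h]

/-- Theorem 2, abstract form: Let S_SG = ⋂_k S(Π(σ_k, λ_k, r_k)) over a
nonempty index set with σ_k ∈ {−1, +1} and r_k ≥ 0, and let Z ⊆ S_SG be symmetric about
the real axis, i.e. Z ∩ ℂ₊ = conj(Z ∩ ℂ₋). Then
h-hull(Z ∩ ℂ₊) ∪ conj(h-hull(Z ∩ ℂ₊)) ⊆ S_SG. -/
theorem stmt_19 {K : Type*} [Nonempty K] (σ lc r : K → ℝ)
    (hσ : ∀ k, σ k = -1 ∨ σ k = 1) (hr : ∀ k, 0 ≤ r k)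
    (Z : Set ℂ)
    (hZ : Z ⊆ ⋂ k, SRegion (PiMat (σ k) (lc k) (r k)))
    (hsym : Z ∩ Cplus = (starRingEnd ℂ) '' (Z ∩ {z : ℂ | z.im ≤ 0})) :
    hhull (Z ∩ Cplus) ∪ (starRingEnd ℂ) '' hhull (Z ∩ Cplus) ⊆
      ⋂ k, SRegion (PiMat (σ k) (lc k) (r k)) := by
  set S : Set ℂ := ⋂ k, SRegion (PiMat (σ k) (lc k) (r k)) with hS
  have hmemS : ∀ z : ℂ, z ∈ S ↔
      ∀ k, 0 ≤ σ k * (Complex.normSq (z - lc k) - (r k)^2) := by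
    intro z
    rw [hS, Set.mem_iInter]
    exact forall_congr' fun k => mem_SRegion_iff' _ _ _ _
  have hconv : HConvex (S ∩ Cplus) := by
    intro z₁ hz₁ z₂ hz₂ w hw
    obtain ⟨h₁S, h₁p⟩ := hz₁
    obtain ⟨h₂S, h₂p⟩ := hz₂
    have h₁p' : 0 < z₁.im := h₁p
    have h₂p' : 0 < z₂.im := h₂p
    have hwp : 0 < w.im := (arc_key' 0 h₁p' h₂p' hw).1
    refine ⟨(hmemS w).mpr fun k => ?_, hwp⟩
    obtain ⟨-, hmin, hmax⟩ := arc_key' (lc k) h₁p' h₂p' hw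
    have hk1 := (hmemS z₁).mp h₁S k
    have hk2 := (hmemS z₂).mp h₂S k
    rcases hσ k with hs | hs <;> rw [hs] at hk1 hk2 ⊢
    · rcases le_total (Complex.normSq (z₁ - lc k)) (Complex.normSq (z₂ - lc k)) with h | h
      · rw [max_eq_right h] at hmax; nlinarith
      · rw [max_eq_left h] at hmax; nlinarith
    · rcases le_total (Complex.normSq (z₁ - lc k)) (Complex.normSq (z₂ - lc k)) with h | h
      · rw [min_eq_left h] at hmin; nlinarith
      · rw [min_eq_right h] at hmin; nlinarith
  have hsub : hhull (Z ∩ Cplus) ⊆ S ∩ Cplus :=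
    Set.sInter_subset_of_mem ⟨hconv, fun z hz => ⟨hZ hz.1, hz.2⟩, Set.inter_subset_right⟩
  intro w hw
  rcases hw with h | ⟨u, hu, rfl⟩
  · exact (hsub h).1
  · have huS := (hsub hu).1
    refine (hmemS _).mpr fun k => ?_
    have hn : Complex.normSq ((starRingEnd ℂ) u - (lc k : ℂ)) = Complex.normSq (u - lc k) := by
      rw [← Complex.normSq_conj (u - (lc k : ℂ))]
      congr 1
      simp [map_sub, Complex.conj_ofReal]
    rw [hn]
    exact (hmemS u).mp huS k
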